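/- arXiv:1109.2208 — 3 statements merged into one kernel-verified Lean document; each statement's English description precedes it below -/
import Mathlib

section
/- Let Z ⊆ X be closed with open complement U, and suppose every irreducible closed subset of Z has dimension < i. Then the restriction map from the free abelian group on i-dimensional irreducible closed subsets of X to the free abelian group on i-dimensional irreducible closed subsets of U (sending V to V ∩ U, which is 0 only if V ⊆ Z) is injective. -/
/-!
An `i`-dimensional irreducible closed `V ⊆ X` cannot lie in `Z`, so it meets the open set `U`;
an irreducible set is then the closure of its trace `V ∩ U`. Hence restriction is injective on
the generators, and a homomorphism of free abelian groups induced by an injective map of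
generators is injective.
-/

open FreeAbelianGroup

theorem FreeAbelianGroup.map_injective {α β : Type*} {f : α → β} (hf : Function.Injective f) :
    Function.Injective (map f) := by
  have hcomm : toFinsupp.comp (map f) = (Finsupp.mapDomain.addMonoidHom f).comp toFinsupp := by
    ext; simp
  intro a b hab
  apply (equivFinsupp α).injective
  apply Finsupp.mapDomain_injective hf
  simpa using congr($hcomm a).symm.trans (congr(toFinsupp $hab).trans congr($hcomm b))

theorem FreeAbelianGroup.injective_of_map_of {α β : Type*}
    {ρ : FreeAbelianGroup α →+ FreeAbelianGroup β} {f : α → β} (hf : Function.Injective f)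
    (hρ : ∀ a, ρ (of a) = of (f a)) : Function.Injective ρ := by
  obtain rfl : ρ = map f := by ext a; simp [hρ]
  exact map_injective hf

section Topology

variable {X : Type*} [TopologicalSpace X] {U : Set X}

theorem IsPreirreducible.closure_inter_eq_of_isOpen {s : Set X} (hs : IsPreirreducible s)
    (hsc : IsClosed s) (hU : IsOpen U) (hne : (s ∩ U).Nonempty) : closure (s ∩ U) = s :=
  (hsc.closure_subset_iff.mpr Set.inter_subset_left).antisymm
    (subset_closure_inter_of_isPreirreducible_of_isOpen hs hU hne)

theorem injOn_preimage_val_of_isOpen (hU : IsOpen U) :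
    {s : Set X | IsPreirreducible s ∧ IsClosed s ∧ (s ∩ U).Nonempty}.InjOn
      (fun s => ((↑) ⁻¹' s : Set U)) := by
  rintro s ⟨hs, hsc, hsU⟩ t ⟨ht, htc, htU⟩ hst
  have htrace : s ∩ U = t ∩ U := by
    simpa only [Set.inter_comm _ U] using Subtype.preimage_coe_eq_preimage_coe_iff.mp hst
  rw [← hs.closure_inter_eq_of_isOpen hsc hU hsU, ← ht.closure_inter_eq_of_isOpen htc hU htU,
    htrace]

end Topology

/-- Let `Z ⊆ X` be closed with open complement `U`, and suppose every irreducible closed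
subset of `Z` has (Krull) dimension `< i`. Then the restriction map from the free abelian
group on `i`-dimensional irreducible closed subsets of `X` to that of `U`, sending `V` to
`V ∩ U`, is injective. -/
theorem stmt_5 {X : Type*} [TopologicalSpace X] (Z U : Set X) (i : ℕ)
    (hZ : IsClosed Z) (hU : U = Zᶜ)
    (hdim : ∀ s : Set X, IsIrreducible s → IsClosed s → s ⊆ Z →
      topologicalKrullDim s < (i : WithBot ℕ∞))
    (ρ : FreeAbelianGroup
        {s : Set X // IsIrreducible s ∧ IsClosed s ∧ topologicalKrullDim s = (i : WithBot ℕ∞)} →+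
        FreeAbelianGroup
        {s : Set U // IsIrreducible s ∧ IsClosed s ∧ topologicalKrullDim s = (i : WithBot ℕ∞)})
    (hρ : ∀ v : {s : Set X // IsIrreducible s ∧ IsClosed s ∧
        topologicalKrullDim s = (i : WithBot ℕ∞)},
      ∃ h, ρ (of v) = of ⟨((↑) ⁻¹' v.1 : Set U), h⟩) :
    Function.Injective ρ := by
  subst hU
  choose hmem hρf using hρ
  refine injective_of_map_of (fun v w hvw => Subtype.ext ?_) hρf
  have hmeets : ∀ v : {s : Set X // IsIrreducible s ∧ IsClosed s ∧
      topologicalKrullDim s = (i : WithBot ℕ∞)}, (v.1 ∩ Zᶜ).Nonempty := by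
    rintro ⟨v, hirr, hcl, hdimv⟩
    exact Set.inter_compl_nonempty_iff.mpr fun hvZ => (hdim v hirr hcl hvZ).ne hdimv
  exact injOn_preimage_val_of_isOpen hZ.isOpen_compl
    ⟨v.2.1.2, v.2.2.1, hmeets v⟩ ⟨w.2.1.2, w.2.2.1, hmeets w⟩ congr(Subtype.val $hvw)
end

section
/- Let X be a scheme, L an invertible O_X-module, and k ≥ 1. In the Grothendieck group K⁰(X) of locally free sheaves, the class 1 − [L] lies in the first step of the γ/λ-filtration; consequently, for any class ξ in the k-th step Fil^k of the topological filtration on K₀(X), [L]·ξ ≡ ξ in Gr^k_top(X), i.e. tensoring by an invertible sheaf acts trivially on the graded pieces of the topological filtration. -/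
open TensorProduct

universe u

/-- A presented (finitely generated) module over `A`: a quotient of some `A^n`. -/
def PresMod (A : Type u) [CommRing A] : Type u := Σ n : ℕ, Submodule A (Fin n → A)

/-- The module presented by a `PresMod`. -/
def PresMod.toMod {A : Type u} [CommRing A] (M : PresMod A) : Type u :=
  (Fin M.1 → A) ⧸ M.2

instance {A : Type u} [CommRing A] (M : PresMod A) : AddCommGroup M.toMod :=
  inferInstanceAs (AddCommGroup ((Fin M.1 → A) ⧸ M.2))

instance {A : Type u} [CommRing A] (M : PresMod A) : Module A M.toMod :=
  inferInstanceAs (Module A ((Fin M.1 → A) ⧸ M.2))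

/-- The short-exact-sequence relations defining the Grothendieck group `K₀` of finitely
generated modules. -/
def K0Rel (A : Type u) [CommRing A] : Set (FreeAbelianGroup (PresMod A)) :=
  { x | ∃ (M M' M'' : PresMod A) (f : M'.toMod →ₗ[A] M.toMod)
      (g : M.toMod →ₗ[A] M''.toMod), Function.Injective f ∧ Function.Surjective g ∧
      LinearMap.range f = LinearMap.ker g ∧
      x = FreeAbelianGroup.of M - FreeAbelianGroup.of M' - FreeAbelianGroup.of M'' }

/-- The Grothendieck group `K₀` of finitely generated `A`-modules (coherent sheaves on
`Spec A`). -/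
def K0 (A : Type u) [CommRing A] : Type u :=
  FreeAbelianGroup (PresMod A) ⧸ AddSubgroup.closure (K0Rel A)

instance (A : Type u) [CommRing A] : AddCommGroup (K0 A) :=
  inferInstanceAs (AddCommGroup
    (FreeAbelianGroup (PresMod A) ⧸ AddSubgroup.closure (K0Rel A)))

/-- The class of a finitely generated module in `K₀`. -/
def K0.cls {A : Type u} [CommRing A] (M : PresMod A) : K0 A :=
  QuotientAddGroup.mk (FreeAbelianGroup.of M)

/-- The support of `M` has codimension `≥ k`: every prime containing the annihilator has
height `≥ k`. -/
def SupportCodimGE {A : Type u} [CommRing A] (k : ℕ) (M : PresMod A) : Prop :=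
  ∀ P : PrimeSpectrum A, Module.annihilator A M.toMod ≤ P.asIdeal →
    (k : ℕ∞) ≤ Order.height P

/-- The `k`-th step of the topological filtration on `K₀`: the subgroup generated by
classes of modules supported in codimension `≥ k`. -/
def filTop (A : Type u) [CommRing A] (k : ℕ) : AddSubgroup (K0 A) :=
  AddSubgroup.closure { x | ∃ M : PresMod A, SupportCodimGE k M ∧ x = K0.cls M }

/-! By a prime filtration of `M` and flatness of `L`, it suffices to treat `M = A ⧸ P` with
`P` prime of height `≥ k`. Over the domain `A ⧸ P` the invertible module `(A ⧸ P) ⊗ L` is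
isomorphic to a nonzero ideal `I`, so `[L ⊗ A ⧸ P] - [A ⧸ P] = -[(A ⧸ P) ⧸ I]`; the annihilator
of `(A ⧸ P) ⧸ I` strictly contains `P`, so it is supported in codimension `≥ k + 1`. -/

section

variable {A : Type u} [CommRing A]

instance (M : PresMod A) : Module.Finite A M.toMod :=
  inferInstanceAs (Module.Finite A ((Fin M.1 → A) ⧸ M.2))

theorem Ideal.le_height_iff_forall_le_height {I : Ideal A} {n : ℕ∞} :
    n ≤ I.height ↔ ∀ P : PrimeSpectrum A, I ≤ P.asIdeal → n ≤ Order.height P := by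
  refine ⟨fun h P hP => ?_, fun h => ?_⟩
  · exact h.trans ((Ideal.height_mono hP).trans_eq P.height_eq_orderHeight)
  · rw [Ideal.height_eq_inf_minimalPrimes]
    refine le_iInf₂ fun P hP => ?_
    have := hP.isPrime
    exact (h ⟨P, this⟩ hP.le).trans_eq (PrimeSpectrum.height_eq_orderHeight ⟨P, this⟩).symm

theorem Ideal.height_add_one_le_of_lt {P I : Ideal A} [P.IsPrime] (h : P < I) :
    P.height + 1 ≤ I.height := by
  rw [I.height_eq_inf_minimalPrimes]
  refine le_iInf₂ fun Q hQ => ?_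
  have := hQ.isPrime
  exact Ideal.height_add_one_le_of_lt_of_isPrime (h.trans_le hQ.le)

def PresMod.zero (A : Type u) [CommRing A] : PresMod A := ⟨0, ⊥⟩

instance : Subsingleton (PresMod.zero A).toMod :=
  inferInstanceAs (Subsingleton ((Fin 0 → A) ⧸ (⊥ : Submodule A (Fin 0 → A))))

namespace K0

theorem cls_eq_add_of_exact {M M' M'' : PresMod A} {f : M'.toMod →ₗ[A] M.toMod}
    {g : M.toMod →ₗ[A] M''.toMod} (hf : Function.Injective f) (hg : Function.Surjective g)
    (hfg : Function.Exact f g) :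
    cls M = cls M' + cls M'' := by
  have hrel : FreeAbelianGroup.of M - FreeAbelianGroup.of M' - FreeAbelianGroup.of M''
      ∈ AddSubgroup.closure (K0Rel A) :=
    AddSubgroup.subset_closure
      ⟨M, M', M'', f, g, hf, hg, (LinearMap.exact_iff.mp hfg).symm, rfl⟩
  have := (QuotientAddGroup.eq_zero_iff _).mpr hrel
  rwa [QuotientAddGroup.mk_sub, QuotientAddGroup.mk_sub, sub_sub, sub_eq_zero] at this

theorem cls_eq_zero_of_subsingleton (M : PresMod A) [Subsingleton M.toMod] : cls M = 0 := by
  have h := cls_eq_add_of_exact (f := LinearMap.id)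
    (g := (LinearMap.id : M.toMod →ₗ[A] M.toMod)) Function.injective_id Function.surjective_id
    fun _ => ⟨fun _ => ⟨0, Subsingleton.elim _ _⟩, fun _ => Subsingleton.elim _ _⟩
  simpa using h

theorem cls_congr {M N : PresMod A} (e : M.toMod ≃ₗ[A] N.toMod) : cls M = cls N := by
  have hexact :
      Function.Exact e.symm.toLinearMap (0 : M.toMod →ₗ[A] (PresMod.zero A).toMod) := by
    intro x
    exact ⟨fun _ => ⟨e x, e.symm_apply_apply x⟩, fun _ => rfl⟩
  rw [cls_eq_add_of_exact e.symm.injective (fun _ => ⟨0, Subsingleton.elim _ _⟩) hexact,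
    cls_eq_zero_of_subsingleton (PresMod.zero A), add_zero]

end K0

section FiniteModule

variable (A) (V : Type u) [AddCommGroup V] [Module A V] [Module.Finite A V]
variable {W : Type u} [AddCommGroup W] [Module A W] [Module.Finite A W]

noncomputable def PresMod.ofFinite : PresMod A :=
  ⟨(Module.Finite.exists_fin' A V).choose,
    LinearMap.ker (Module.Finite.exists_fin' A V).choose_spec.choose⟩

noncomputable def PresMod.ofFiniteEquiv : (PresMod.ofFinite A V).toMod ≃ₗ[A] V :=
  LinearMap.quotKerEquivOfSurjective _ (Module.Finite.exists_fin' A V).choose_spec.choose_spec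

noncomputable def K0.clsOf : K0 A := K0.cls (PresMod.ofFinite A V)

variable {A V}

theorem K0.clsOf_eq_cls {M : PresMod A} (e : M.toMod ≃ₗ[A] V) : K0.clsOf A V = K0.cls M :=
  K0.cls_congr ((PresMod.ofFiniteEquiv A V).trans e.symm)

theorem K0.clsOf_congr (e : V ≃ₗ[A] W) : K0.clsOf A V = K0.clsOf A W :=
  K0.clsOf_eq_cls ((PresMod.ofFiniteEquiv A W).trans e.symm)

theorem K0.clsOf_eq_zero_of_subsingleton [Subsingleton V] : K0.clsOf A V = 0 :=
  have := (PresMod.ofFiniteEquiv A V).injective.subsingleton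
  K0.cls_eq_zero_of_subsingleton _

theorem K0.clsOf_eq_add_of_exact {U : Type u} [AddCommGroup U] [Module A U] [Module.Finite A U]
    {f : U →ₗ[A] V} {g : V →ₗ[A] W} (hf : Function.Injective f) (hg : Function.Surjective g)
    (hfg : Function.Exact f g) :
    K0.clsOf A V = K0.clsOf A U + K0.clsOf A W := by
  let eU := PresMod.ofFiniteEquiv A U
  let eV := PresMod.ofFiniteEquiv A V
  let eW := PresMod.ofFiniteEquiv A W
  refine K0.cls_eq_add_of_exact (f := eV.symm.toLinearMap ∘ₗ f ∘ₗ eU)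
    (g := eW.symm.toLinearMap ∘ₗ g ∘ₗ eV) (eV.symm.injective.comp (hf.comp eU.injective))
    (eW.symm.surjective.comp (hg.comp eV.surjective)) ?_
  refine (Function.Exact.iff_of_ladder_linearEquiv (e₁ := eU) (e₂ := eV) (e₃ := eW) ?_ ?_).mp
    hfg
  · ext; simp
  · ext; simp

theorem K0.clsOf_mem_filTop {k : ℕ} (hV : (k : ℕ∞) ≤ (Module.annihilator A V).height) :
    K0.clsOf A V ∈ filTop A k := by
  refine AddSubgroup.subset_closure ⟨PresMod.ofFinite A V, fun P hP => ?_, rfl⟩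
  rw [(PresMod.ofFiniteEquiv A V).annihilator_eq] at hP
  exact Ideal.le_height_iff_forall_le_height.mp hV P hP

end FiniteModule

theorem Module.Invertible.exists_linearEquiv_ideal_ne_bot (B M : Type*) [CommRing B] [IsDomain B]
    [AddCommGroup M] [Module B M] [Module.Invertible B M] :
    ∃ I : Ideal B, I ≠ ⊥ ∧ Nonempty (M ≃ₗ[B] I) := by
  obtain ⟨I, ⟨e⟩⟩ := Module.Invertible.exists_linearEquiv_ideal B M
  refine ⟨I, fun hI => ?_, ⟨e⟩⟩
  subst hI
  have : Subsingleton M := e.toEquiv.subsingleton_congr.mpr inferInstance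
  exact zero_ne_one (FaithfulSMul.eq_of_smul_eq_smul (α := M) (m₁ := (0 : B)) (m₂ := 1)
    fun _ => Subsingleton.elim _ _)

theorem Ideal.lt_comap_mk_of_ne_bot {P : Ideal A} {I : Ideal (A ⧸ P)} (hI : I ≠ ⊥) :
    P < I.comap (Ideal.Quotient.mk P) := by
  calc P = (⊥ : Ideal (A ⧸ P)).comap (Ideal.Quotient.mk P) := by
        rw [← RingHom.ker_eq_comap_bot, Ideal.mk_ker]
    _ < I.comap (Ideal.Quotient.mk P) := (Ideal.comap_mono bot_le).lt_of_ne fun h =>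
        hI (Ideal.comap_injective_of_surjective _ Ideal.Quotient.mk_surjective h).symm

variable (L : Type u) [AddCommGroup L] [Module A L] [Module.Invertible A L]

theorem K0.clsOf_tensor_quotient_sub_mem_filTop {k : ℕ} (P : Ideal A) [P.IsPrime]
    (hP : (k : ℕ∞) ≤ P.height) :
    K0.clsOf A (L ⊗[A] (A ⧸ P)) - K0.clsOf A (A ⧸ P) ∈ filTop A (k + 1) := by
  obtain ⟨I, hI, ⟨e⟩⟩ :=
    Module.Invertible.exists_linearEquiv_ideal_ne_bot (A ⧸ P) ((A ⧸ P) ⊗[A] L)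
  let eI : L ⊗[A] (A ⧸ P) ≃ₗ[A] I :=
    (TensorProduct.comm A L (A ⧸ P)).trans (e.restrictScalars A)
  have : Module.Finite A I := Module.Finite.equiv eI
  have hexact := K0.clsOf_eq_add_of_exact (f := I.subtype.restrictScalars A)
    (g := I.mkQ.restrictScalars A) Subtype.val_injective I.mkQ_surjective
    (LinearMap.exact_subtype_mkQ I)
  have hann : Module.annihilator A ((A ⧸ P) ⧸ I) = I.comap (Ideal.Quotient.mk P) := by
    rw [← Module.comap_annihilator (R := A ⧸ P), Ideal.annihilator_quotient]
    rfl
  rw [K0.clsOf_congr eI, hexact, sub_add_cancel_left]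
  refine neg_mem (K0.clsOf_mem_filTop ?_)
  calc ((k + 1 : ℕ) : ℕ∞) ≤ P.height + 1 := by push_cast; gcongr
    _ ≤ _ := hann ▸ Ideal.height_add_one_le_of_lt (Ideal.lt_comap_mk_of_ne_bot hI)

theorem K0.clsOf_tensor_sub_mem_filTop [IsNoetherianRing A] {k : ℕ} (V : Type u) [AddCommGroup V]
    [Module A V] [Module.Finite A V] (hV : (k : ℕ∞) ≤ (Module.annihilator A V).height) :
    K0.clsOf A (L ⊗[A] V) - K0.clsOf A V ∈ filTop A (k + 1) := by
  revert hV
  induction ‹Module.Finite A V› using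
    IsNoetherianRing.induction_on_isQuotientEquivQuotientPrime A with
  | subsingleton N =>
    intro
    simp [K0.clsOf_eq_zero_of_subsingleton]
  | quotient N p e =>
    intro hN
    rw [e.annihilator_eq, Ideal.annihilator_quotient] at hN
    rw [K0.clsOf_congr e, K0.clsOf_congr (e.lTensor L)]
    exact K0.clsOf_tensor_quotient_sub_mem_filTop L p.asIdeal hN
  | exact N₁ N₂ N₃ f g hf hg hfg h₁ h₃ =>
    intro hN
    rw [K0.clsOf_eq_add_of_exact hf hg hfg,
      K0.clsOf_eq_add_of_exact (Module.Flat.lTensor_preserves_injective_linearMap f hf)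
        (LinearMap.lTensor_surjective L hg) (Module.Flat.lTensor_exact L hfg)]
    convert add_mem (h₁ (hN.trans (Ideal.height_mono (f.annihilator_le_of_injective hf))))
      (h₃ (hN.trans (Ideal.height_mono (g.annihilator_le_of_surjective hg)))) using 1
    abel

end

/-- Tensoring by an invertible module acts trivially on the graded pieces of the
topological filtration: for a noetherian ring `A`, an invertible module `L`, and a
finitely generated module `M` supported in codimension `≥ k`,
`[L ⊗ M] − [M] ∈ Fil^{k+1}_top`. -/
theorem stmt_12 {A : Type u} [CommRing A] [IsNoetherianRing A]
    (L L' : Type u) [AddCommGroup L] [Module A L] [AddCommGroup L'] [Module A L']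
    (hinv : Nonempty ((L ⊗[A] L') ≃ₗ[A] A)) (k : ℕ)
    (M : PresMod A) (hM : SupportCodimGE k M)
    (N : PresMod A) (hN : Nonempty (N.toMod ≃ₗ[A] (L ⊗[A] M.toMod))) :
    K0.cls N - K0.cls M ∈ filTop A (k + 1) := by
  obtain ⟨e⟩ := hinv
  obtain ⟨eN⟩ := hN
  have : Module.Invertible A L := .left e
  rw [← K0.clsOf_eq_cls eN, ← K0.clsOf_eq_cls (LinearEquiv.refl A M.toMod)]
  exact K0.clsOf_tensor_sub_mem_filTop L M.toMod (Ideal.le_height_iff_forall_le_height.mpr hM)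
end

section
/- Let X₁, X₂, X₃ be schemes over a base S, and let Z₁ ⊆ X₁ ×_S X₂, Z₂ ⊆ X₂ ×_S X₃ be closed subschemes such that both projections Z₁ → X₁, Z₁ → X₂ are finite, and both projections Z₂ → X₂, Z₂ → X₃ are finite. Let Y = (X₁ ×_S Z₂) ∩ (Z₁ ×_S X₃) ⊆ X₁ ×_S X₂ ×_S X₃ (scheme-theoretic intersection). Then the projections Y → X₁ and Y → X₃ are finite morphisms. -/
open AlgebraicGeometry CategoryTheory CategoryTheory.Limits

noncomputable section

variable {S X₁ X₂ X₃ : Scheme} (f₁ : X₁ ⟶ S) (f₂ : X₂ ⟶ S) (f₃ : X₃ ⟶ S)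

/-- The triple fiber product `X₁ ×_S X₂ ×_S X₃`. -/
def tripleProd : Scheme := pullback (pullback.snd f₁ f₂ ≫ f₂) f₃

/-- Projection `X₁ ×_S X₂ ×_S X₃ ⟶ X₁ ×_S X₂`. -/
def p₁₂ : tripleProd f₁ f₂ f₃ ⟶ pullback f₁ f₂ :=
  pullback.fst (pullback.snd f₁ f₂ ≫ f₂) f₃

/-- Projection `X₁ ×_S X₂ ×_S X₃ ⟶ X₃`. -/
def p₃ : tripleProd f₁ f₂ f₃ ⟶ X₃ :=
  pullback.snd (pullback.snd f₁ f₂ ≫ f₂) f₃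

/-- Projection `X₁ ×_S X₂ ×_S X₃ ⟶ X₂ ×_S X₃`. -/
def p₂₃ : tripleProd f₁ f₂ f₃ ⟶ pullback f₂ f₃ :=
  pullback.lift (p₁₂ f₁ f₂ f₃ ≫ pullback.snd f₁ f₂) (p₃ f₁ f₂ f₃)
    (by rw [Category.assoc]; exact pullback.condition (f := pullback.snd f₁ f₂ ≫ f₂) (g := f₃))

/-!
The intersection `Y` maps to `Z₁`, and composing with `Z₁ ⟶ X₁ ×_S X₂` gives the same map as
`Y ⟶ X₁ ×_S Z₂ ⟶ X₁ ×_S X₂`: a closed immersion followed by the base change of the finite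
`Z₂ ⟶ X₂`. As `Z₁ ⟶ X₁ ×_S X₂` is separated, `Y ⟶ Z₁` is therefore finite, and so is
`Y ⟶ Z₁ ⟶ X₁`. The projection to `X₃` is symmetric, going through `Z₂`.
-/

lemma p₂₃_snd : p₂₃ f₁ f₂ f₃ ≫ pullback.snd f₂ f₃ = p₃ f₁ f₂ f₃ :=
  pullback.lift_snd _ _ _

lemma isPullback_p₂₃_p₁₂ :
    IsPullback (p₂₃ f₁ f₂ f₃) (p₁₂ f₁ f₂ f₃) (pullback.fst f₂ f₃) (pullback.snd f₁ f₂) := by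
  have outer : IsPullback (p₂₃ f₁ f₂ f₃ ≫ pullback.snd f₂ f₃) (p₁₂ f₁ f₂ f₃) f₃
      (pullback.snd f₁ f₂ ≫ f₂) := by
    rw [p₂₃_snd]
    exact (IsPullback.of_hasPullback _ _).flip
  exact outer.of_right (pullback.lift_fst _ _ _) (IsPullback.of_hasPullback f₂ f₃).flip

/-- In a fibre product `Y = W₁ ×_T W₂` where `W₁ = T ×_P Z` is the base change of a finite
`ι : Z ⟶ P`, the map `Y ⟶ Z` is finite as soon as `W₂ ⟶ T ⟶ P` is. -/
lemma isFinite_comp_of_isPullback {Y W₁ W₂ T Z P : Scheme} {u : Y ⟶ W₁} {v : Y ⟶ W₂}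
    {a : W₁ ⟶ T} {c : W₂ ⟶ T} (hY : IsPullback u v a c) {b : W₁ ⟶ Z} {q : T ⟶ P}
    {ι : Z ⟶ P} (hW : IsPullback a b q ι) [IsFinite ι] [IsFinite (c ≫ q)] :
    IsFinite (u ≫ b) := by
  have : IsFinite a := MorphismProperty.of_isPullback hW.flip ‹_›
  have : IsFinite v := MorphismProperty.of_isPullback hY ‹_›
  have : IsFinite ((u ≫ b) ≫ ι) := by
    rw [Category.assoc, ← hW.w, reassoc_of% hY.w]
    infer_instance
  exact .of_comp _ ι

/-- Let `Z₁ ⊆ X₁ ×_S X₂` and `Z₂ ⊆ X₂ ×_S X₃` be closed subschemes whose projections to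
the factors are all finite. Let `Y = (X₁ ×_S Z₂) ∩ (Z₁ ×_S X₃)` (scheme-theoretic
intersection inside `X₁ ×_S X₂ ×_S X₃`). Then the projections `Y ⟶ X₁` and `Y ⟶ X₃` are
finite. -/
theorem stmt_15 {Z₁ Z₂ : Scheme} (ι₁ : Z₁ ⟶ pullback f₁ f₂) (ι₂ : Z₂ ⟶ pullback f₂ f₃)
    [IsClosedImmersion ι₁] [IsClosedImmersion ι₂]
    (h₁₁ : IsFinite (ι₁ ≫ pullback.fst f₁ f₂)) (h₁₂ : IsFinite (ι₁ ≫ pullback.snd f₁ f₂))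
    (h₂₂ : IsFinite (ι₂ ≫ pullback.fst f₂ f₃)) (h₂₃ : IsFinite (ι₂ ≫ pullback.snd f₂ f₃)) :
    -- `Y` is the fiber product of `Z₁ ×_S X₃ = pullback (p₁₂) ι₁` and
    -- `X₁ ×_S Z₂ = pullback (p₂₃) ι₂` over the triple product, with its map to the
    -- triple product; we assert both composite projections are finite.
    IsFinite ((pullback.fst (pullback.fst (p₁₂ f₁ f₂ f₃) ι₁)
        (pullback.fst (p₂₃ f₁ f₂ f₃) ι₂) ≫ pullback.fst (p₁₂ f₁ f₂ f₃) ι₁) ≫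
        p₁₂ f₁ f₂ f₃ ≫ pullback.fst f₁ f₂) ∧
    IsFinite ((pullback.fst (pullback.fst (p₁₂ f₁ f₂ f₃) ι₁)
        (pullback.fst (p₂₃ f₁ f₂ f₃) ι₂) ≫ pullback.fst (p₁₂ f₁ f₂ f₃) ι₁) ≫
        p₃ f₁ f₂ f₃) := by
  have hW₁ := IsPullback.of_hasPullback (p₁₂ f₁ f₂ f₃) ι₁
  have hW₂ := IsPullback.of_hasPullback (p₂₃ f₁ f₂ f₃) ι₂
  have hY := IsPullback.of_hasPullback (pullback.fst (p₁₂ f₁ f₂ f₃) ι₁)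
    (pullback.fst (p₂₃ f₁ f₂ f₃) ι₂)
  have hT := isPullback_p₂₃_p₁₂ f₁ f₂ f₃
  -- `X₁ ×_S Z₂ ⟶ X₁ ×_S X₂` is the base change of `Z₂ ⟶ X₂`, and symmetrically.
  have hW₂P₁ : IsFinite (pullback.fst (p₂₃ f₁ f₂ f₃) ι₂ ≫ p₁₂ f₁ f₂ f₃) :=
    MorphismProperty.of_isPullback (hW₂.paste_horiz hT.flip).flip h₂₂
  have hW₁P₂ : IsFinite (pullback.fst (p₁₂ f₁ f₂ f₃) ι₁ ≫ p₂₃ f₁ f₂ f₃) :=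
    MorphismProperty.of_isPullback (hW₁.paste_horiz hT).flip h₁₂
  have hYZ₁ := isFinite_comp_of_isPullback hY hW₁
  have hYZ₂ := isFinite_comp_of_isPullback hY.flip hW₂
  constructor
  · rw [Category.assoc, reassoc_of% hW₁.w, ← Category.assoc]
    infer_instance
  · rw [hY.w, ← p₂₃_snd, Category.assoc, reassoc_of% hW₂.w, ← Category.assoc]
    infer_instance

end
end
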